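/- If an infinite tournament G=(V,E) is not in O₂ (has no quasi-kernel), then G ∈ IO(1,1): there exist vertices x,y and a partition of V into Out_G^1(y) and In_G^1(x). -/

import Mathlib

/-!
Pick any vertex `a`. Since `a` alone is not a quasi-kernel, some vertex `b` is not reached from
`a` by a path of length at most two; in a tournament this means that `b` beats `a` and every
out-neighbour of `a`. Then `{b} ∪ N⁺(a)` lies in the closed out-neighbourhood of `b`, and its
complement lies in the closed in-neighbourhood of `a`.
-/

/-- There is a directed path of length at most `n` from `x` to `y`. -/
def PathLe {V : Type*} (E : V → V → Prop) (n : ℕ) (x y : V) : Prop :=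
  ∃ k ≤ n, ∃ f : ℕ → V, f 0 = x ∧ f k = y ∧ ∀ i < k, E (f i) (f (i + 1))

/-- A directed path of length at most `n` from `x` to `y` all of whose vertices lie in `W`. -/
def PathLeIn {V : Type*} (E : V → V → Prop) (W : Set V) (n : ℕ) (x y : V) : Prop :=
  ∃ k ≤ n, ∃ f : ℕ → V, f 0 = x ∧ f k = y ∧ (∀ i ≤ k, f i ∈ W) ∧ ∀ i < k, E (f i) (f (i + 1))

/-- `A` spans no edges of `E` (in either direction). -/
def Indep {V : Type*} (E : V → V → Prop) (A : Set V) : Prop :=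
  ∀ a ∈ A, ∀ b ∈ A, ¬ E a b

/-- The induced subgraph on `W` is in the class `O_n`: some independent set `A ⊆ W`
reaches every vertex of `W` by a directed path of length at most `n` inside `W`. -/
def OutClass {V : Type*} (E : V → V → Prop) (n : ℕ) (W : Set V) : Prop :=
  ∃ A ⊆ W, Indep E A ∧ ∀ v ∈ W, ∃ a ∈ A, PathLeIn E W n a v

/-- The induced subgraph on `W` is in the class `I_n`: some independent set `A ⊆ W`
is reached from every vertex of `W` by a directed path of length at most `n` inside `W`. -/
def InClass {V : Type*} (E : V → V → Prop) (n : ℕ) (W : Set V) : Prop :=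
  ∃ A ⊆ W, Indep E A ∧ ∀ v ∈ W, ∃ a ∈ A, PathLeIn E W n v a

/-- The induced subgraph on `W` is in `IO(m, ℓ)`. -/
def IOClass {V : Type*} (E : V → V → Prop) (m ℓ : ℕ) (W : Set V) : Prop :=
  ∃ V₁ V₂ : Set V, V₁ ∪ V₂ = W ∧ Disjoint V₁ V₂ ∧ InClass E m V₁ ∧ OutClass E ℓ V₂

/-- `E` is a tournament: no loops and exactly one direction between distinct vertices. -/
def IsTournament {V : Type*} (E : V → V → Prop) : Prop :=
  (∀ x, ¬ E x x) ∧ ∀ x y, x ≠ y → (E x y ↔ ¬ E y x)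

section

variable {V : Type*} {E : V → V → Prop}

theorem IsTournament.adj_of_not_adj (ht : IsTournament E) {x y : V} (hne : x ≠ y)
    (h : ¬ E x y) : E y x :=
  (ht.2 y x hne.symm).mpr h

theorem indep_singleton {a : V} (ha : ¬ E a a) : Indep E {a} := by
  rintro x rfl y rfl
  exact ha

namespace PathLe

theorem refl (n : ℕ) (x : V) : PathLe E n x x :=
  ⟨0, Nat.zero_le n, fun _ => x, rfl, rfl, fun _ hi => absurd hi (Nat.not_lt_zero _)⟩

theorem of_adj {n : ℕ} (hn : 1 ≤ n) {x y : V} (h : E x y) : PathLe E n x y :=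
  ⟨1, hn, fun i => if i = 0 then x else y, rfl, rfl, fun i hi => by
    obtain rfl : i = 0 := by omega
    simpa using h⟩

theorem of_adj_adj {x y z : V} (hxy : E x y) (hyz : E y z) : PathLe E 2 x z :=
  ⟨2, le_rfl, fun i => if i = 0 then x else if i = 1 then y else z, rfl, rfl, fun i hi => by
    interval_cases i <;> simpa⟩

end PathLe

namespace PathLeIn

theorem refl {W : Set V} (n : ℕ) {x : V} (hx : x ∈ W) : PathLeIn E W n x x :=
  ⟨0, Nat.zero_le n, fun _ => x, rfl, rfl, fun _ _ => hx,
    fun _ hi => absurd hi (Nat.not_lt_zero _)⟩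

theorem of_adj {W : Set V} {x y : V} (hx : x ∈ W) (hy : y ∈ W) (h : E x y) :
    PathLeIn E W 1 x y :=
  ⟨1, le_rfl, fun i => if i = 0 then x else y, rfl, rfl,
    fun i _ => by by_cases hi : i = 0 <;> simp [hi, hx, hy],
    fun i hi => by
      obtain rfl : i = 0 := by omega
      simpa using h⟩

end PathLeIn

theorem InClass.one_of_sink {W : Set V} {a : V} (haW : a ∈ W) (haa : ¬ E a a)
    (hsink : ∀ v ∈ W, v ≠ a → E v a) : InClass E 1 W := by
  refine ⟨{a}, Set.singleton_subset_iff.mpr haW, indep_singleton haa, fun v hv => ⟨a, rfl, ?_⟩⟩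
  by_cases hva : v = a
  · exact hva ▸ PathLeIn.refl 1 hv
  · exact PathLeIn.of_adj hv haW (hsink v hv hva)

theorem OutClass.one_of_source {W : Set V} {b : V} (hbW : b ∈ W) (hbb : ¬ E b b)
    (hsource : ∀ v ∈ W, v ≠ b → E b v) : OutClass E 1 W := by
  refine ⟨{b}, Set.singleton_subset_iff.mpr hbW, indep_singleton hbb, fun v hv => ⟨b, rfl, ?_⟩⟩
  by_cases hvb : v = b
  · exact hvb ▸ PathLeIn.refl 1 hv
  · exact PathLeIn.of_adj hbW hv (hsource v hv hvb)

namespace IsTournament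

theorem dominates_of_not_pathLe_two (ht : IsTournament E) {a b : V}
    (hpath : ¬ PathLe E 2 a b) : E b a ∧ ∀ z, E a z → E b z := by
  have hne : a ≠ b := fun h => hpath (h ▸ PathLe.refl 2 a)
  have hnab : ¬ E a b := fun h => hpath (PathLe.of_adj (by norm_num) h)
  refine ⟨ht.adj_of_not_adj hne hnab, fun z haz => ?_⟩
  have hzb : z ≠ b := by
    rintro rfl
    exact hnab haz
  exact ht.adj_of_not_adj hzb fun hzb' => hpath (PathLe.of_adj_adj haz hzb')

theorem ioClass_one_one_of_dominates (ht : IsTournament E) {a b : V} (hba : E b a)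
    (hdom : ∀ z, E a z → E b z) : IOClass E 1 1 Set.univ := by
  set W : Set V := insert b {v | E a v}
  refine ⟨Wᶜ, W, Set.compl_union_self W, disjoint_compl_left, ?_, ?_⟩
  · have haW : a ∉ W := by
      rintro (rfl | haa)
      exacts [ht.1 a hba, ht.1 a haa]
    refine InClass.one_of_sink haW (ht.1 a) fun v hv hva => ?_
    exact ht.adj_of_not_adj (Ne.symm hva) fun hav => hv (Or.inr hav)
  · refine OutClass.one_of_source (Set.mem_insert b _) (ht.1 b) fun v hv hvb => ?_
    exact hdom v (hv.resolve_left hvb)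

end IsTournament

end

theorem infinite_tournament_io11_general {V : Type*} (E : V → V → Prop)
    (htour : IsTournament E)
    (h : ¬ ∃ A : Set V, Indep E A ∧ ∀ v : V, ∃ a ∈ A, PathLe E 2 a v) :
    IOClass E 1 1 Set.univ := by
  push Not at h
  -- the empty set is not a quasi-kernel, so `V` is nonempty
  obtain ⟨a, -⟩ := h ∅ fun _ ha => absurd ha (Set.notMem_empty _)
  obtain ⟨b, hb⟩ := h {a} (indep_singleton (htour.1 a))
  obtain ⟨hba, hdom⟩ := htour.dominates_of_not_pathLe_two (hb a rfl)
  exact htour.ioClass_one_one_of_dominates hba hdom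

/-- An infinite tournament with no quasi-kernel is in `IO(1,1)`. -/
theorem infinite_tournament_io11 {V : Type*} [Infinite V] (E : V → V → Prop)
    (htour : IsTournament E)
    (h : ¬ ∃ A : Set V, Indep E A ∧ ∀ v : V, ∃ a ∈ A, PathLe E 2 a v) :
    IOClass E 1 1 Set.univ :=
  infinite_tournament_io11_general E htour h
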